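/- arXiv:2509.06179 — 2 statements merged into one kernel-verified Lean document; each statement's English description precedes it below -/
import Mathlib

section
/- For each α ≥ 0, there exists a unique γ ≥ 0 satisfying 4^α · B(1+α, 1+α) = (27/4)^γ · B(1+γ, 1+2γ). In particular, α = 0 corresponds to γ = 0. -/
open MeasureTheory

/-- Euler Beta function as an integral. -/
noncomputable def Beta (a b : ℝ) : ℝ := ∫ t in (0:ℝ)..1, t ^ (a - 1) * (1 - t) ^ (b - 1)

/-!
Both sides are integrals `∫₀¹ φ(t)^s dt`, with `φ(t) = 4t(1-t)` on the left and
`φ(t) = (27/4) t (1-t)²` on the right: each `φ` is normalised by its maximum (at `1/2`, resp.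
`1/3`), so it takes values in `(0, 1)` almost everywhere on `(0, 1)`. For such `φ`, dominated
convergence makes `s ↦ ∫ φ^s` continuous on `[0, ∞)` with limit `0` at infinity, and it is
strictly decreasing from its value `1` at `s = 0`; hence it maps `[0, ∞)` bijectively onto
`(0, 1]`. The left side lies in `(0, 1]` for this reason, and the right side hits it once.
-/

open Set Filter Topology

section IntegralRpow

variable {X : Type*} [MeasurableSpace X] {μ : Measure X} {f : X → ℝ}

lemma integral_pos_of_ae_pos (hμ : μ ≠ 0) {g : X → ℝ} (hg : Integrable g μ)
    (hpos : ∀ᵐ x ∂μ, 0 < g x) : 0 < ∫ x, g x ∂μ := by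
  have := ae_neBot.2 hμ
  rw [integral_pos_iff_support_of_nonneg_ae (hpos.mono fun _ hx => hx.le) hg]
  exact pos_iff_ne_zero.2 <| frequently_ae_iff.1 <| (hpos.mono fun _ hx => hx.ne').frequently

lemma ae_norm_rpow_le_one (hf : ∀ᵐ x ∂μ, f x ∈ Ioo 0 1) {γ : ℝ} (hγ : 0 ≤ γ) :
    ∀ᵐ x ∂μ, ‖f x ^ γ‖ ≤ 1 :=
  hf.mono fun _ hx => by
    rw [Real.norm_of_nonneg (Real.rpow_nonneg hx.1.le γ)]
    exact Real.rpow_le_one hx.1.le hx.2.le hγ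

variable [IsFiniteMeasure μ]

lemma integrable_rpow_of_ae_mem_Ioo (hfm : AEMeasurable f μ) (hf : ∀ᵐ x ∂μ, f x ∈ Ioo 0 1)
    {γ : ℝ} (hγ : 0 ≤ γ) : Integrable (fun x => f x ^ γ) μ :=
  .of_bound (hfm.pow_const γ).aestronglyMeasurable 1 (ae_norm_rpow_le_one hf hγ)

lemma continuousOn_integral_rpow (hfm : AEMeasurable f μ) (hf : ∀ᵐ x ∂μ, f x ∈ Ioo 0 1) :
    ContinuousOn (fun γ : ℝ => ∫ x, f x ^ γ ∂μ) (Ici 0) :=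
  continuousOn_of_dominated (fun _ _ => (hfm.pow_const _).aestronglyMeasurable)
    (fun _ hγ => ae_norm_rpow_le_one hf hγ) (integrable_const 1)
    (hf.mono fun _ hx => (Real.continuous_const_rpow hx.1.ne').continuousOn)

lemma strictAntiOn_integral_rpow (hμ : μ ≠ 0) (hfm : AEMeasurable f μ)
    (hf : ∀ᵐ x ∂μ, f x ∈ Ioo 0 1) :
    StrictAntiOn (fun γ : ℝ => ∫ x, f x ^ γ ∂μ) (Ici 0) := by
  intro a ha b hb hab
  have hia := integrable_rpow_of_ae_mem_Ioo hfm hf ha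
  have hib := integrable_rpow_of_ae_mem_Ioo hfm hf hb
  rw [← sub_pos, ← integral_sub hia hib]
  exact integral_pos_of_ae_pos hμ (hia.sub hib) <| hf.mono fun _ hx =>
    sub_pos.2 (Real.rpow_lt_rpow_of_exponent_gt hx.1 hx.2 hab)

lemma tendsto_integral_rpow_atTop (hfm : AEMeasurable f μ) (hf : ∀ᵐ x ∂μ, f x ∈ Ioo 0 1) :
    Tendsto (fun γ : ℝ => ∫ x, f x ^ γ ∂μ) atTop (𝓝 0) := by
  simpa using tendsto_integral_filter_of_dominated_convergence (fun _ => (1 : ℝ))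
    (.of_forall fun γ => (hfm.pow_const γ).aestronglyMeasurable)
    ((eventually_ge_atTop 0).mono fun _ hγ => ae_norm_rpow_le_one hf hγ) (integrable_const 1)
    (hf.mono fun _ hx => tendsto_rpow_atTop_of_base_lt_one _ (by linarith [hx.1]) hx.2)

theorem bijOn_integral_rpow (hμ : μ ≠ 0) (hfm : AEMeasurable f μ)
    (hf : ∀ᵐ x ∂μ, f x ∈ Ioo 0 1) :
    BijOn (fun γ : ℝ => ∫ x, f x ^ γ ∂μ) (Ici 0) (Ioc 0 (μ.real univ)) := by
  have hanti := strictAntiOn_integral_rpow hμ hfm hf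
  have hzero : ∫ x, f x ^ (0 : ℝ) ∂μ = μ.real univ := by simp
  refine ⟨fun γ hγ => ⟨?_, ?_⟩, hanti.injOn, fun c hc => ?_⟩
  · exact integral_pos_of_ae_pos hμ (integrable_rpow_of_ae_mem_Ioo hfm hf hγ)
      (hf.mono fun _ hx => Real.rpow_pos_of_pos hx.1 γ)
  · exact hzero ▸ hanti.antitoneOn self_mem_Ici hγ hγ
  · obtain ⟨M, hMc, hM⟩ := ((tendsto_integral_rpow_atTop hfm hf).eventually
      (eventually_lt_nhds hc.1)).and (eventually_ge_atTop 0) |>.exists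
    obtain ⟨γ, hγ, rfl⟩ := intermediate_value_Icc' hM
      ((continuousOn_integral_rpow hfm hf).mono Icc_subset_Ici_self) ⟨hMc.le, hzero ▸ hc.2⟩
    exact ⟨γ, hγ.1, rfl⟩

end IntegralRpow

lemma rpow_mul_Beta_eq_integral {c : ℝ} (hc : 0 ≤ c) (k : ℕ) (a : ℝ) :
    c ^ a * Beta (1 + a) (1 + k * a) = ∫ t in Ioo 0 1, (c * (t * (1 - t) ^ k)) ^ a := by
  rw [Beta, intervalIntegral.integral_of_le zero_le_one, integral_Ioc_eq_integral_Ioo,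
    ← integral_const_mul]
  refine setIntegral_congr_fun measurableSet_Ioo fun t ht => ?_
  have h1t : 0 ≤ 1 - t := by linarith [ht.2]
  have hpow : 0 ≤ (1 - t) ^ k := pow_nonneg h1t k
  simp only [add_sub_cancel_left]
  rw [Real.mul_rpow hc (mul_nonneg ht.1.le hpow), Real.mul_rpow ht.1.le hpow,
    Real.rpow_natCast_mul h1t]

lemma ae_restrict_Ioo_mem_Ioo_of_ne {g : ℝ → ℝ} (t₀ : ℝ)
    (hg : ∀ t ∈ Ioo (0 : ℝ) 1, t ≠ t₀ → g t ∈ Ioo 0 1) :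
    ∀ᵐ t ∂volume.restrict (Ioo (0 : ℝ) 1), g t ∈ Ioo 0 1 := by
  have hne : ∀ᵐ t ∂volume.restrict (Ioo (0 : ℝ) 1), t ≠ t₀ :=
    ae_restrict_of_ae (by simp [ae_iff])
  filter_upwards [ae_restrict_mem measurableSet_Ioo, hne] with t ht htt₀ using hg t ht htt₀

lemma mul_mul_one_sub_mem_Ioo {t : ℝ} (ht : t ∈ Ioo (0 : ℝ) 1) (h : t ≠ 1 / 2) :
    4 * (t * (1 - t) ^ 1) ∈ Ioo 0 1 := by
  have : 0 < (2 * t - 1) ^ 2 := by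
    have : 2 * t - 1 ≠ 0 := fun h' => h (by linarith)
    positivity
  constructor <;> nlinarith [ht.1, ht.2]

lemma mul_mul_one_sub_sq_mem_Ioo {t : ℝ} (ht : t ∈ Ioo (0 : ℝ) 1)
    (h : t ≠ 1 / 3) : 27 / 4 * (t * (1 - t) ^ 2) ∈ Ioo 0 1 := by
  have h3 : 0 < (3 * t - 1) ^ 2 := by
    have : 3 * t - 1 ≠ 0 := fun h' => h (by linarith)
    positivity
  have h1t : 0 < 1 - t := by linarith [ht.2]
  constructor
  · have := ht.1; positivity
  · nlinarith [mul_pos h3 (show (0 : ℝ) < 4 - 3 * t by linarith [ht.2])]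

theorem stmt5 :
    (∀ α : ℝ, 0 ≤ α → ∃! γ : ℝ, 0 ≤ γ ∧
      (4:ℝ) ^ α * Beta (1 + α) (1 + α) = ((27:ℝ)/4) ^ γ * Beta (1 + γ) (1 + 2*γ)) ∧
    (4:ℝ) ^ (0:ℝ) * Beta (1 + 0) (1 + 0)
      = ((27:ℝ)/4) ^ (0:ℝ) * Beta (1 + 0) (1 + 2*0) := by
  refine ⟨fun α hα => ?_, by norm_num⟩
  have hμ : volume.restrict (Ioo (0 : ℝ) 1) ≠ 0 := by simp
  have hμ_univ : (volume.restrict (Ioo (0 : ℝ) 1)).real univ = 1 := by simp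
  have hLHS : (4:ℝ) ^ α * Beta (1 + α) (1 + α) =
      ∫ t in Ioo 0 1, (4 * (t * (1 - t) ^ 1)) ^ α := by
    simpa using rpow_mul_Beta_eq_integral (c := 4) (by norm_num) 1 α
  have hRHS (γ : ℝ) : ((27:ℝ)/4) ^ γ * Beta (1 + γ) (1 + 2*γ) =
      ∫ t in Ioo 0 1, (27 / 4 * (t * (1 - t) ^ 2)) ^ γ := by
    simpa using rpow_mul_Beta_eq_integral (c := 27 / 4) (by norm_num) 2 γ
  have hbij := bijOn_integral_rpow hμ (by fun_prop)
    (ae_restrict_Ioo_mem_Ioo_of_ne (1 / 3) fun _ => mul_mul_one_sub_sq_mem_Ioo)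
  have hmem := (bijOn_integral_rpow hμ (by fun_prop)
    (ae_restrict_Ioo_mem_Ioo_of_ne (1 / 2) fun _ => mul_mul_one_sub_mem_Ioo)).mapsTo hα
  rw [hμ_univ] at hbij hmem
  obtain ⟨γ, hγ, hγα⟩ := hbij.surjOn hmem
  dsimp only at hγα
  refine ⟨γ, ⟨hγ, by rw [hLHS, hRHS, hγα]⟩, fun δ ⟨hδ, hδα⟩ => hbij.injOn hδ hγ ?_⟩
  rw [← hRHS, ← hδα, hLHS, hγα]
end

section
/- For μ > 0 and the habitat [-L/2, L/2] with L = π/√μ, the function ρ_s(X) = C (cos(√μ X))^(1/μ) with C > 0 is a nonnegative steady solution of ρ_T = (ρ^(μ-1) ρ_X)_X + ρ^μ vanishing at the boundary, and it is positive on the open interval (-L/2, L/2). -/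
/-!
Writing `u = ρ ^ μ`, the flux is `ρ ^ (μ - 1) ρ' = u' / μ`, so the steady equation becomes the
linear equation `u'' + μ u = 0`. For `ρ = C cos(√μ X) ^ (1/μ)` one has `u = C ^ μ cos(√μ X)`,
which solves it and is positive exactly where `|√μ X| < π / 2`.
-/

open Real Set Filter Topology

lemma rpow_one_div_rpow_sub_one_mul_rpow {a μ : ℝ} (ha : 0 < a) (hμ : μ ≠ 0) :
    (a ^ (1 / μ)) ^ (μ - 1) * a ^ (1 / μ - 1) = 1 := by
  rw [← rpow_mul ha.le, ← rpow_add ha, show 1 / μ * (μ - 1) + (1 / μ - 1) = 0 by field_simp; ring,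
    rpow_zero]

lemma rpow_sub_one_mul_deriv_rpow_one_div {u : ℝ → ℝ} {u' μ x : ℝ} (hu : HasDerivAt u u' x)
    (hpos : 0 < u x) (hμ : μ ≠ 0) :
    (u x ^ (1 / μ)) ^ (μ - 1) * deriv (fun y => u y ^ (1 / μ)) x = u' / μ := by
  rw [(hu.rpow_const (p := 1 / μ) (Or.inl hpos.ne')).deriv]
  calc (u x ^ (1 / μ)) ^ (μ - 1) * (u' * (1 / μ) * u x ^ (1 / μ - 1))
      = (u x ^ (1 / μ)) ^ (μ - 1) * u x ^ (1 / μ - 1) * (u' / μ) := by ring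
    _ = u' / μ := by rw [rpow_one_div_rpow_sub_one_mul_rpow hpos hμ, one_mul]

theorem deriv_flux_add_rpow_eq_zero {ρ u u' : ℝ → ℝ} {μ x : ℝ} {U : Set ℝ} (hU : IsOpen U)
    (hx : x ∈ U) (hμ : μ ≠ 0) (hρ : ∀ y ∈ U, ρ y = u y ^ (1 / μ)) (hu_pos : ∀ y ∈ U, 0 < u y)
    (hu : ∀ y ∈ U, HasDerivAt u (u' y) y) (hu' : HasDerivAt u' (-μ * u x) x) :
    deriv (fun y => ρ y ^ (μ - 1) * deriv ρ y) x + ρ x ^ μ = 0 := by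
  have hflux : ∀ y ∈ U, ρ y ^ (μ - 1) * deriv ρ y = u' y / μ := by
    intro y hy
    have hρ_near : ρ =ᶠ[𝓝 y] fun z => u z ^ (1 / μ) := eventually_of_mem (hU.mem_nhds hy) hρ
    rw [hρ_near.deriv_eq, hρ y hy]
    exact rpow_sub_one_mul_deriv_rpow_one_div (hu y hy) (hu_pos y hy) hμ
  have hflux_near : (fun y => ρ y ^ (μ - 1) * deriv ρ y) =ᶠ[𝓝 x] fun y => u' y / μ :=
    eventually_of_mem (hU.mem_nhds hx) hflux
  rw [hflux_near.deriv_eq, (hu'.div_const μ).deriv, hρ x hx, one_div,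
    rpow_inv_rpow (hu_pos x hx).le hμ]
  field_simp
  ring

lemma cos_mul_pos_of_mem_Ioo {s X : ℝ} (hs : 0 < s)
    (hX : X ∈ Ioo (-(π / s) / 2) ((π / s) / 2)) : 0 < cos (s * X) := by
  have hedge : s * ((π / s) / 2) = π / 2 := by field_simp
  apply cos_pos_of_mem_Ioo
  constructor <;> nlinarith [hX.1, hX.2]

lemma cos_mul_nonneg_of_mem_Icc {s X : ℝ} (hs : 0 < s)
    (hX : X ∈ Icc (-(π / s) / 2) ((π / s) / 2)) : 0 ≤ cos (s * X) := by
  have hedge : s * ((π / s) / 2) = π / 2 := by field_simp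
  apply cos_nonneg_of_mem_Icc
  constructor <;> nlinarith [hX.1, hX.2]

theorem stmt19 (μ C : ℝ) (hμ : 0 < μ) (hC : 0 < C) :
    (∀ X ∈ Set.Icc (-(Real.pi / Real.sqrt μ) / 2) ((Real.pi / Real.sqrt μ) / 2),
        0 ≤ C * Real.cos (Real.sqrt μ * X) ^ (1/μ)) ∧
    (∀ X ∈ Set.Ioo (-(Real.pi / Real.sqrt μ) / 2) ((Real.pi / Real.sqrt μ) / 2),
        0 < C * Real.cos (Real.sqrt μ * X) ^ (1/μ)) ∧
    (∀ X ∈ Set.Ioo (-(Real.pi / Real.sqrt μ) / 2) ((Real.pi / Real.sqrt μ) / 2),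
        deriv (fun Y => (C * Real.cos (Real.sqrt μ * Y) ^ (1/μ)) ^ (μ - 1) *
            deriv (fun Z => C * Real.cos (Real.sqrt μ * Z) ^ (1/μ)) Y) X
          + (C * Real.cos (Real.sqrt μ * X) ^ (1/μ)) ^ μ = 0) ∧
    C * Real.cos (Real.sqrt μ * (-(Real.pi / Real.sqrt μ) / 2)) ^ (1/μ) = 0 ∧
    C * Real.cos (Real.sqrt μ * ((Real.pi / Real.sqrt μ) / 2)) ^ (1/μ) = 0 := by
  set s := √μ
  have hs : 0 < s := sqrt_pos.mpr hμ
  have hss : s * s = μ := mul_self_sqrt hμ.le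
  have hedge : s * ((π / s) / 2) = π / 2 := by field_simp
  have hzero : (0 : ℝ) ^ (1 / μ) = 0 := zero_rpow (by positivity)
  refine ⟨fun X hX => mul_nonneg hC.le (rpow_nonneg (cos_mul_nonneg_of_mem_Icc hs hX) _),
    fun X hX => mul_pos hC (rpow_pos_of_pos (cos_mul_pos_of_mem_Ioo hs hX) _),
    fun X hX => ?_, by rw [neg_div, mul_neg, hedge, cos_neg, cos_pi_div_two, hzero, mul_zero],
    by rw [hedge, cos_pi_div_two, hzero, mul_zero]⟩
  have hcos : ∀ y, HasDerivAt (fun y => C ^ μ * cos (s * y)) (-(C ^ μ * s) * sin (s * y)) y :=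
    fun y => (((hasDerivAt_id y).const_mul s).cos.const_mul _).congr_deriv
      (by simp only [id_eq, mul_one]; ring)
  have hsin : HasDerivAt (fun y => -(C ^ μ * s) * sin (s * y)) (-μ * (C ^ μ * cos (s * X))) X :=
    (((hasDerivAt_id X).const_mul s).sin.const_mul _).congr_deriv
      (by rw [← hss]; simp only [id_eq, mul_one]; ring)
  refine deriv_flux_add_rpow_eq_zero isOpen_Ioo hX hμ.ne' (fun y hy => ?_)
    (fun y hy => mul_pos (rpow_pos_of_pos hC μ) (cos_mul_pos_of_mem_Ioo hs hy))
    (fun y _ => hcos y) hsin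
  rw [mul_rpow (rpow_nonneg hC.le μ) (cos_mul_pos_of_mem_Ioo hs hy).le, one_div,
    rpow_rpow_inv hC.le hμ.ne']
end
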